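/- Let μ : ℝⁿ → [0,∞) be a positively homogeneous convex function with μ(x) = 0 if and only if x = 0 (the Minkowski functional of a bounded open convex set containing the origin, not necessarily symmetric). Let X_μ = {z ∈ ℂⁿ : μ(Im z) < π/4} and define u_μ : X_μ → [0, π/4) by u_μ(z) = μ(Im z). Then u_μ belongs to U(ℝⁿ, X_μ) (in particular u_μ is plurisubharmonic), u_μ is maximal, and for every x ∈ ℝⁿ and ξ ∈ ℝⁿ = T_xℝⁿ one has E_{ℝⁿ,X_μ}(x,ξ) = E_{u_μ,X_μ}(x,ξ) = μ(ξ). -/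

import Mathlib

open Metric Filter Complex Set
open MeasureTheory intervalIntegral Real

variable (n : ℕ)

/-- The canonical inclusion `ℝⁿ ⊆ ℂⁿ`. -/
def reC (x : Fin n → ℝ) : Fin n → ℂ := fun i => (x i : ℂ)

/-- Imaginary part `Im : ℂⁿ → ℝⁿ`. -/
def imPart (z : Fin n → ℂ) : Fin n → ℝ := fun i => (z i).im

/-- Real part `Re : ℂⁿ → ℝⁿ`. -/
def rePart (z : Fin n → ℂ) : Fin n → ℝ := fun i => (z i).re

/-- A function `u : ℂⁿ → ℝ` is *plurisubharmonic* on `Ω ⊆ ℂⁿ` if it is upper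
semicontinuous on `Ω` and satisfies the sub-mean-value inequality on every closed disc
of every complex line contained in `Ω`. -/
def PlurisubharmonicOn (u : (Fin n → ℂ) → ℝ) (Ω : Set (Fin n → ℂ)) : Prop :=
  UpperSemicontinuousOn u Ω ∧
    ∀ a b : Fin n → ℂ, ∀ c : ℂ, ∀ r : ℝ, 0 < r →
      (∀ ζ ∈ closedBall c r, a + ζ • b ∈ Ω) →
      u (a + c • b) ≤
        (2 * Real.pi)⁻¹ * ∫ θ in (0:ℝ)..(2 * Real.pi), u (a + circleMap c r θ • b)

/-- The class `𝒰(ℝⁿ ∩ X, X)`: plurisubharmonic functions `u : X → [0, π/4)` vanishing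
at the real points of `X`. -/
def MemPSHU (X : Set (Fin n → ℂ)) (u : (Fin n → ℂ) → ℝ) : Prop :=
  PlurisubharmonicOn n u X ∧ (∀ z ∈ X, 0 ≤ u z ∧ u z < Real.pi / 4) ∧
    ∀ x : Fin n → ℝ, reC n x ∈ X → u (reC n x) = 0

/-- `E_{u,X}(x, ξ)`: the infimum, over `C¹` curves `γ : (-ε, ε) → X` with `γ 0 = x` and
`γ' 0 = i·ξ`, of `limsup_{t→0⁺} u (γ t)/t` (computed in `EReal`). -/
noncomputable def EInf (X : Set (Fin n → ℂ)) (u : (Fin n → ℂ) → ℝ)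
    (x ξ : Fin n → ℝ) : EReal :=
  sInf {L : EReal | ∃ ε : ℝ, 0 < ε ∧ ∃ γ : ℝ → Fin n → ℂ,
    ContDiffOn ℝ 1 γ (Set.Ioo (-ε) ε) ∧ (∀ t ∈ Set.Ioo (-ε) ε, γ t ∈ X) ∧
    γ 0 = reC n x ∧ HasDerivAt γ (Complex.I • reC n ξ) 0 ∧
    L = limsup (fun t : ℝ => ((u (γ t) / t : ℝ) : EReal)) (nhdsWithin 0 (Set.Ioi 0))}

/-- `E_{ℝⁿ,X}(x, ξ) = sup_{u ∈ 𝒰} E_{u,X}(x, ξ)`. -/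
noncomputable def ESup (X : Set (Fin n → ℂ)) (x ξ : Fin n → ℝ) : EReal :=
  ⨆ u ∈ {u : (Fin n → ℂ) → ℝ | MemPSHU n X u}, EInf n X u x ξ

lemma jensen_circle {n : ℕ} (μ : (Fin n → ℝ) → ℝ)
    (hconvex : ConvexOn ℝ Set.univ μ) (hcont : Continuous μ)
    (a b : Fin n → ℂ) (c : ℂ) (r : ℝ) :
    μ (imPart n (a + c • b)) ≤
      (2 * Real.pi)⁻¹ * ∫ θ in (0:ℝ)..(2 * Real.pi), μ (imPart n (a + circleMap c r θ • b)) := by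
  set A := imPart n a
  set B := imPart n b
  set C := rePart n b
  have him : ∀ ζ : ℂ, imPart n (a + ζ • b) = A + ζ.re • B + ζ.im • C := by
    intro ζ
    funext i
    simp [imPart, rePart, A, B, C, Complex.add_im, Complex.mul_im]
    ring
  have hre : ∀ θ : ℝ, (circleMap c r θ).re = c.re + r * Real.cos θ := by
    intro θ; simp [circleMap]
  have him' : ∀ θ : ℝ, (circleMap c r θ).im = c.im + r * Real.sin θ := by
    intro θ; simp [circleMap]
  set f : ℝ → (Fin n → ℝ) := fun θ => (A + c.re • B + c.im • C)
      + (r * Real.cos θ) • B + (r * Real.sin θ) • C with hf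
  have hfeq : ∀ θ : ℝ, imPart n (a + circleMap c r θ • b) = f θ := by
    intro θ
    rw [him, hre, him', hf]
    module
  have hfc : Continuous f := by fun_prop
  set meas := volume.restrict (Ioc (0:ℝ) (2 * Real.pi)) with hmeas
  have h2pi : (0:ℝ) < 2 * Real.pi := by positivity
  have huniv : meas Set.univ = ENNReal.ofReal (2 * Real.pi) := by
    rw [hmeas, Measure.restrict_apply_univ, Real.volume_Ioc]
    norm_num
  haveI : IsFiniteMeasure meas := ⟨by rw [huniv]; exact ENNReal.ofReal_lt_top⟩
  haveI : NeZero meas := ⟨by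
    intro h
    rw [h] at huniv; simp only [Measure.coe_zero, Pi.zero_apply] at huniv
    have : (0:ℝ) < 2 * Real.pi := h2pi
    rw [eq_comm, ENNReal.ofReal_eq_zero] at huniv
    linarith⟩
  have hfi : Integrable f meas := (hfc.integrableOn_Ioc)
  have hgi : Integrable (μ ∘ f) meas := ((hcont.comp hfc).integrableOn_Ioc)
  have hjen := hconvex.map_average_le (hcont.continuousOn) isClosed_univ
    (Filter.Eventually.of_forall (fun _ => Set.mem_univ _)) hfi hgi
  -- compute average of f
  have hint_f : ∫ θ, f θ ∂meas = (2 * Real.pi) • (A + c.re • B + c.im • C) := by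
    rw [hmeas, ← intervalIntegral.integral_of_le h2pi.le]
    rw [hf]
    have h1 : IntervalIntegrable (fun θ : ℝ => (A + c.re • B + c.im • C) + (r * Real.cos θ) • B)
        volume 0 (2 * Real.pi) := by
      apply Continuous.intervalIntegrable; fun_prop
    have h2 : IntervalIntegrable (fun θ : ℝ => (r * Real.sin θ) • C) volume 0 (2 * Real.pi) := by
      apply Continuous.intervalIntegrable; fun_prop
    have h3 : IntervalIntegrable (fun _ : ℝ => (A + c.re • B + c.im • C)) volume 0 (2 * Real.pi) :=
      intervalIntegrable_const
    have h4 : IntervalIntegrable (fun θ : ℝ => (r * Real.cos θ) • B) volume 0 (2 * Real.pi) := by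
      apply Continuous.intervalIntegrable; fun_prop
    rw [intervalIntegral.integral_add h1 h2, intervalIntegral.integral_add h3 h4,
      intervalIntegral.integral_const]
    have hc1 : (∫ θ in (0:ℝ)..(2*Real.pi), (r * Real.cos θ) • B) = (0:ℝ) • B := by
      rw [intervalIntegral.integral_smul_const]
      congr 1
      rw [intervalIntegral.integral_const_mul, integral_cos]
      simp [Real.sin_two_pi]
    have hc2 : (∫ θ in (0:ℝ)..(2*Real.pi), (r * Real.sin θ) • C) = (0:ℝ) • C := by
      rw [intervalIntegral.integral_smul_const]
      congr 1
      rw [intervalIntegral.integral_const_mul, integral_sin]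
      simp [Real.cos_two_pi]
    rw [hc1, hc2]
    simp
  have havg_f : ⨍ θ, f θ ∂meas = A + c.re • B + c.im • C := by
    rw [MeasureTheory.average_eq, hint_f, measureReal_def, huniv, ENNReal.toReal_ofReal h2pi.le,
      smul_smul, inv_mul_cancel₀ h2pi.ne', one_smul]
  have havg_g : ⨍ θ, μ (f θ) ∂meas
      = (2 * Real.pi)⁻¹ * ∫ θ in (0:ℝ)..(2 * Real.pi), μ (f θ) := by
    rw [MeasureTheory.average_eq, measureReal_def, huniv, ENNReal.toReal_ofReal h2pi.le, smul_eq_mul,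
      hmeas, ← intervalIntegral.integral_of_le h2pi.le]
  rw [havg_f] at hjen
  calc μ (imPart n (a + c • b)) = μ (A + c.re • B + c.im • C) := by rw [him]
    _ ≤ ⨍ θ, μ (f θ) ∂meas := hjen
    _ = (2 * Real.pi)⁻¹ * ∫ θ in (0:ℝ)..(2 * Real.pi), μ (f θ) := havg_g
    _ = _ := by
        congr 1
        apply intervalIntegral.integral_congr
        intro θ _
        exact congrArg μ (hfeq θ).symm

lemma usc_exists_max {K : Set ℂ} (hK : IsCompact K) (hne : K.Nonempty)
    {f : ℂ → ℝ} (hf : UpperSemicontinuousOn f K) :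
    ∃ p ∈ K, ∀ q ∈ K, f q ≤ f p := by
  have hbdd : BddAbove (f '' K) := by
    by_contra hb
    have : ∀ k : ℕ, ∃ x ∈ K, (k : ℝ) < f x := by
      intro k
      rcases not_bddAbove_iff.mp hb (k : ℝ) with ⟨y, ⟨x, hx, rfl⟩, hy⟩
      exact ⟨x, hx, hy⟩
    choose x hx hfx using this
    obtain ⟨p, hp, φ, hφ, htend⟩ := hK.tendsto_subseq hx
    have husc := hf p hp (f p + 1) (by linarith)
    have htend' : Tendsto (fun k => x (φ k)) atTop (nhdsWithin p K) :=
      tendsto_nhdsWithin_of_tendsto_nhds_of_eventually_within _ htend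
        (Filter.Eventually.of_forall (fun k => hx (φ k)))
    have hev : ∀ᶠ k in atTop, f (x (φ k)) < f p + 1 := htend'.eventually husc
    rcases (hev.and (Filter.eventually_atTop.mpr ⟨⌈f p + 1⌉₊, fun k hk => hk⟩)).exists with
      ⟨k, hk1, hk2⟩
    have h1 : (φ k : ℝ) < f (x (φ k)) := hfx (φ k)
    have h2 : (k:ℝ) ≤ (φ k : ℝ) := by exact_mod_cast hφ.le_apply
    have h3 : (⌈f p + 1⌉₊ : ℝ) ≤ (k : ℝ) := by exact_mod_cast hk2
    have h4 : f p + 1 ≤ (⌈f p + 1⌉₊ : ℝ) := Nat.le_ceil _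
    linarith
  set M := sSup (f '' K) with hM
  have hex : ∀ k : ℕ, ∃ x ∈ K, M - 1/(k+1) < f x := by
    intro k
    have h1 : M - 1/(k+1) < M := by
      have : (0:ℝ) < 1/(k+1) := by positivity
      linarith
    rcases exists_lt_of_lt_csSup (hne.image f) h1 with ⟨y, ⟨x, hx, rfl⟩, hy⟩
    exact ⟨x, hx, hy⟩
  choose x hx hfx using hex
  obtain ⟨p, hp, φ, hφ, htend⟩ := hK.tendsto_subseq hx
  refine ⟨p, hp, fun q hq => ?_⟩
  have hqM : f q ≤ M := le_csSup hbdd ⟨q, hq, rfl⟩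
  have hpM : M ≤ f p := by
    by_contra hlt
    push_neg at hlt
    set y := (f p + M)/2 with hy
    have hylt : y < M := by rw [hy]; linarith
    have husc := hf p hp y (by rw [hy]; linarith)
    have htend' : Tendsto (fun k => x (φ k)) atTop (nhdsWithin p K) :=
      tendsto_nhdsWithin_of_tendsto_nhds_of_eventually_within _ htend
        (Filter.Eventually.of_forall (fun k => hx (φ k)))
    have hev : ∀ᶠ k in atTop, f (x (φ k)) < y := htend'.eventually husc
    have h3 : Tendsto (fun k : ℕ => 1/((φ k:ℝ)+1)) atTop (nhds 0) :=
      tendsto_one_div_add_atTop_nhds_zero_nat.comp hφ.tendsto_atTop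
    have hev2 : ∀ᶠ k in atTop, 1/((φ k:ℝ)+1) < M - y :=
      (h3.eventually (eventually_lt_nhds (by linarith : (0:ℝ) < M - y)))
    rcases (hev.and hev2).exists with ⟨k, hk1, hk2⟩
    have := hfx (φ k)
    linarith
  linarith

lemma usc_closed_upper {K : Set ℂ} (hK : IsClosed K) {f : ℂ → ℝ}
    (hf : UpperSemicontinuousOn f K) (M : ℝ) :
    IsClosed {q ∈ K | M ≤ f q} := by
  apply IsSeqClosed.isClosed
  intro x p hx htend
  have hpK : p ∈ K := hK.isSeqClosed (fun k => (hx k).1) htend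
  refine ⟨hpK, ?_⟩
  by_contra hlt
  push_neg at hlt
  have husc := hf p hpK ((f p + M)/2) (by linarith)
  have htend' : Tendsto x atTop (nhdsWithin p K) :=
    tendsto_nhdsWithin_of_tendsto_nhds_of_eventually_within _ htend
      (Filter.Eventually.of_forall (fun k => (hx k).1))
  rcases (htend'.eventually husc).exists with ⟨k, hk⟩
  have := (hx k).2
  linarith

lemma maxPrinciple {v : ℂ → ℝ} {K Ω : Set ℂ} (hK : IsCompact K) (hΩ : IsOpen Ω) (hΩK : Ω ⊆ K)
    (husc : UpperSemicontinuousOn v K)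
    (hsub : ∀ c r, 0 < r → closedBall c r ⊆ Ω →
      v c ≤ (2 * Real.pi)⁻¹ * ∫ θ in (0:ℝ)..(2 * Real.pi), v (circleMap c r θ))
    (hint : ∀ c r, 0 < r → closedBall c r ⊆ Ω →
      IntervalIntegrable (fun θ => v (circleMap c r θ)) volume 0 (2 * Real.pi))
    {m : ℝ} (hbdry : ∀ p ∈ K, p ∉ Ω → v p ≤ m) :
    ∀ p ∈ K, v p ≤ m := by
  intro p₀ hp₀
  by_contra hcon
  push_neg at hcon
  obtain ⟨pm, hpm, hmax⟩ := usc_exists_max hK ⟨p₀, hp₀⟩ husc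
  set M := v pm with hM
  have hMm : m < M := lt_of_lt_of_le hcon (hmax p₀ hp₀)
  set A := {q ∈ K | M ≤ v q} with hA
  have hAclosed : IsClosed A := usc_closed_upper hK.isClosed husc M
  have hAcomp : IsCompact A := hK.of_isClosed_subset hAclosed (fun q hq => hq.1)
  have hAne : A.Nonempty := ⟨pm, hpm, le_refl _⟩
  obtain ⟨p, hpA, hpmax⟩ := hAcomp.exists_isMaxOn hAne (Complex.continuous_re.continuousOn)
  have hpK : p ∈ K := hpA.1
  have hpΩ : p ∈ Ω := by
    by_contra h
    have := hbdry p hpK h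
    have := hpA.2
    linarith
  rcases Metric.isOpen_iff.mp hΩ p hpΩ with ⟨ρ, hρ, hball⟩
  set r := ρ/2 with hr
  have hrpos : 0 < r := by positivity
  have hcb : closedBall p r ⊆ Ω :=
    (Metric.closedBall_subset_ball (by rw [hr]; linarith)).trans hball
  have hvp : v p = M := le_antisymm (hmax p hpK) hpA.2
  have hcirc_mem : ∀ θ : ℝ, circleMap p r θ ∈ Ω :=
    fun θ => hcb (circleMap_mem_closedBall p hrpos.le θ)
  have hgle : ∀ θ : ℝ, v (circleMap p r θ) ≤ M := fun θ => hmax _ (hΩK (hcirc_mem θ))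
  have h2pi : (0:ℝ) < 2 * Real.pi := by positivity
  have hintv := hint p r hrpos hcb
  have hsubv := hsub p r hrpos hcb
  set g : ℝ → ℝ := fun θ => M - v (circleMap p r θ) with hg
  have hgint : IntervalIntegrable g volume 0 (2 * Real.pi) :=
    intervalIntegrable_const.sub hintv
  have hg0 : ∀ θ, 0 ≤ g θ := fun θ => by simp [hg]; linarith [hgle θ]
  have hgle0 : ∫ θ in (0:ℝ)..(2 * Real.pi), g θ ≤ 0 := by
    rw [intervalIntegral.integral_sub intervalIntegrable_const hintv,
      intervalIntegral.integral_const]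
    have : 2 * Real.pi * M ≤ ∫ θ in (0:ℝ)..(2 * Real.pi), v (circleMap p r θ) := by
      rw [← hvp]
      calc 2 * Real.pi * v p ≤ 2 * Real.pi * ((2 * Real.pi)⁻¹ *
            ∫ θ in (0:ℝ)..(2 * Real.pi), v (circleMap p r θ)) := by
            exact mul_le_mul_of_nonneg_left hsubv h2pi.le
        _ = _ := by field_simp
    simp only [smul_eq_mul, sub_zero]
    linarith
  have hgae : g =ᵐ[volume.restrict (Ioc (0:ℝ) (2 * Real.pi))] 0 := by
    have hIoc : IntegrableOn g (Ioc (0:ℝ) (2 * Real.pi)) volume :=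
      (intervalIntegrable_iff_integrableOn_Ioc_of_le h2pi.le).mp hgint
    have hzero : ∫ θ in Ioc (0:ℝ) (2 * Real.pi), g θ = 0 := by
      rw [← intervalIntegral.integral_of_le h2pi.le]
      exact le_antisymm hgle0 (intervalIntegral.integral_nonneg h2pi.le (fun θ _ => hg0 θ))
    exact (MeasureTheory.integral_eq_zero_iff_of_nonneg (fun θ => hg0 θ) hIoc).mp hzero
  -- find θ ∈ Ioo 0 1 with g θ = 0
  have hex : ∃ θ ∈ Ioo (0:ℝ) 1, g θ = 0 := by
    by_contra hno
    push_neg at hno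
    have hsubset : Ioo (0:ℝ) 1 ⊆ {θ | ¬ g θ = 0} := fun θ hθ => hno θ hθ
    have hnull : volume.restrict (Ioc (0:ℝ) (2 * Real.pi)) {θ | ¬ g θ = 0} = 0 := by
      rw [Filter.eventuallyEq_iff_exists_mem] at hgae
      rcases hgae with ⟨s, hs, hgs⟩
      rw [MeasureTheory.mem_ae_iff] at hs
      refine measure_mono_null ?_ hs
      intro θ hθ
      simp only [Set.mem_compl_iff]
      intro hθs
      exact hθ (hgs hθs)
    have hmono : volume.restrict (Ioc (0:ℝ) (2 * Real.pi)) (Ioo (0:ℝ) 1) = 0 :=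
      measure_mono_null hsubset hnull
    rw [Measure.restrict_apply measurableSet_Ioo] at hmono
    have : Ioo (0:ℝ) 1 ∩ Ioc (0:ℝ) (2 * Real.pi) = Ioo (0:ℝ) 1 := by
      apply Set.inter_eq_self_of_subset_left
      intro θ hθ
      exact ⟨hθ.1, le_trans hθ.2.le (by linarith [Real.pi_gt_three])⟩
    rw [this, Real.volume_Ioo] at hmono
    simp at hmono
  rcases hex with ⟨θ, hθ, hgθ⟩
  set q := circleMap p r θ with hq
  have hvq : v q = M := by simp [hg] at hgθ; linarith
  have hqA : q ∈ A := ⟨hΩK (hcirc_mem θ), le_of_eq hvq.symm⟩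
  have hcosθ : 0 < Real.cos θ := by
    apply Real.cos_pos_of_mem_Ioo
    constructor
    · linarith [hθ.1, Real.pi_gt_three]
    · linarith [hθ.2, Real.pi_gt_three]
  have hqre : p.re < q.re := by
    have : q.re = p.re + r * Real.cos θ := by simp [hq, circleMap]
    rw [this]
    nlinarith
  exact absurd (hpmax hqA) (not_le.mpr hqre)

lemma strip_PL (psi : ℂ → ℝ) (b : ℝ) (hb : 0 < b)
    (husc : UpperSemicontinuousOn psi {ζ : ℂ | ζ.re ∈ Icc 0 b})
    (hbound : ∀ ζ : ℂ, ζ.re ∈ Icc 0 b → 0 ≤ psi ζ ∧ psi ζ ≤ Real.pi / 4)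
    (hzero : ∀ ζ : ℂ, ζ.re = 0 → psi ζ = 0)
    (hsub : ∀ c r, 0 < r → closedBall c r ⊆ {ζ : ℂ | ζ.re ∈ Ioo 0 b} →
      psi c ≤ (2 * Real.pi)⁻¹ * ∫ θ in (0:ℝ)..(2 * Real.pi), psi (circleMap c r θ))
    (hintpsi : ∀ c r, 0 < r → closedBall c r ⊆ {ζ : ℂ | ζ.re ∈ Ioo 0 b} →
      IntervalIntegrable (fun θ => psi (circleMap c r θ)) volume 0 (2 * Real.pi))
    (t : ℝ) (ht : 0 < t) (htb : t < b) : psi t ≤ (Real.pi/4) * t / b := by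
  set β := b/2 with hβ
  have hβpos : 0 < β := by positivity
  set α := (Real.pi/4)/b with hα
  have hαpos : 0 < α := by rw [hα]; positivity
  have key : ∀ ε : ℝ, 0 < ε → psi t ≤ α * t + ε * β^2 := by
    intro ε hε
    set h : ℂ → ℝ := fun ζ => α * ζ.re + ε * (ζ.im^2 - (ζ.re - β)^2) with hh
    have hhcont : Continuous h := by rw [hh]; fun_prop
    set T : ℝ := Real.sqrt (Real.pi/(4*ε) + β^2) + 1 with hT
    have hTpos : 0 < T := by
      have := Real.sqrt_nonneg (Real.pi/(4*ε) + β^2)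
      rw [hT]; linarith
    have hT2 : Real.pi/4 ≤ ε * (T^2 - β^2) := by
      have h0 : (0:ℝ) ≤ Real.pi/(4*ε) + β^2 := by positivity
      have h1 : Real.pi/(4*ε) + β^2 ≤ T^2 := by
        rw [hT]
        nlinarith [Real.sq_sqrt h0, Real.sqrt_nonneg (Real.pi/(4*ε) + β^2)]
      have h2 : ε * (Real.pi/(4*ε)) = Real.pi/4 := by field_simp
      nlinarith
    set K : Set ℂ := {ζ | ζ.re ∈ Icc 0 b ∧ ζ.im ∈ Icc (-T) T} with hK
    set Ω : Set ℂ := {ζ | ζ.re ∈ Ioo 0 b ∧ ζ.im ∈ Ioo (-T) T} with hΩ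
    have hΩopen : IsOpen Ω :=
      ((isOpen_Ioo).preimage Complex.continuous_re).inter
        ((isOpen_Ioo).preimage Complex.continuous_im)
    have hKclosed : IsClosed K :=
      ((isClosed_Icc).preimage Complex.continuous_re).inter
        ((isClosed_Icc).preimage Complex.continuous_im)
    have hKcomp : IsCompact K := by
      apply (isCompact_closedBall (0:ℂ) (b + T)).of_isClosed_subset hKclosed
      intro ζ hζ
      rw [Metric.mem_closedBall, dist_zero_right]
      calc ‖ζ‖ ≤ |ζ.re| + |ζ.im| := Complex.norm_le_abs_re_add_abs_im ζ
        _ ≤ b + T := by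
            rcases hζ with ⟨h1, h2⟩
            have e1 : |ζ.re| ≤ b := abs_le.mpr ⟨by linarith [h1.1], h1.2⟩
            have e2 : |ζ.im| ≤ T := abs_le.mpr ⟨h2.1, h2.2⟩
            linarith
    have hΩK : Ω ⊆ K := by
      intro ζ hζ
      exact ⟨⟨hζ.1.1.le, hζ.1.2.le⟩, ⟨hζ.2.1.le, hζ.2.2.le⟩⟩
    have hKstrip : K ⊆ {ζ : ℂ | ζ.re ∈ Icc 0 b} := fun ζ hζ => hζ.1
    have hΩstrip : Ω ⊆ {ζ : ℂ | ζ.re ∈ Ioo 0 b} := fun ζ hζ => hζ.1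
    set v : ℂ → ℝ := fun ζ => psi ζ + (-(h ζ)) with hv
    have husc_v : UpperSemicontinuousOn v K := by
      apply UpperSemicontinuousOn.add (husc.mono hKstrip)
      exact ((hhcont.neg).upperSemicontinuous).upperSemicontinuousOn K
    have hharm : ∀ (c : ℂ) (r : ℝ),
        ∫ θ in (0:ℝ)..(2 * Real.pi), h (circleMap c r θ) = 2 * Real.pi * h c := by
      intro c r
      have hfun : (fun θ : ℝ => h (circleMap c r θ)) = fun θ =>
          h c + (α*r - ε*(2*(c.re - β)*r)) * Real.cos θ + (ε*(2*c.im*r)) * Real.sin θ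
            - (ε*r^2) * (Real.cos θ^2 - Real.sin θ^2) := by
        funext θ
        simp only [hh, circleMap, Complex.add_re, Complex.add_im, Complex.mul_re, Complex.mul_im,
          Complex.ofReal_re, Complex.ofReal_im, Complex.exp_ofReal_mul_I_re,
          Complex.exp_ofReal_mul_I_im]
        ring
      rw [hfun]
      have i1 : IntervalIntegrable (fun θ : ℝ => h c + (α*r - ε*(2*(c.re - β)*r)) * Real.cos θ)
          volume 0 (2 * Real.pi) := by apply Continuous.intervalIntegrable; fun_prop
      have i2 : IntervalIntegrable (fun θ : ℝ => (ε*(2*c.im*r)) * Real.sin θ)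
          volume 0 (2 * Real.pi) := by apply Continuous.intervalIntegrable; fun_prop
      have i3 : IntervalIntegrable (fun θ : ℝ =>
          (ε*r^2) * (Real.cos θ^2 - Real.sin θ^2)) volume 0 (2 * Real.pi) := by
        apply Continuous.intervalIntegrable; fun_prop
      have i0 : IntervalIntegrable (fun _ : ℝ => h c) volume 0 (2 * Real.pi) :=
        intervalIntegrable_const
      have i4 : IntervalIntegrable (fun θ : ℝ => (α*r - ε*(2*(c.re - β)*r)) * Real.cos θ)
          volume 0 (2 * Real.pi) := by apply Continuous.intervalIntegrable; fun_prop
      rw [intervalIntegral.integral_sub (i1.add i2) i3, intervalIntegral.integral_add i1 i2,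
        intervalIntegral.integral_add i0 i4, intervalIntegral.integral_const,
        intervalIntegral.integral_const_mul, intervalIntegral.integral_const_mul,
        intervalIntegral.integral_const_mul, integral_cos, integral_sin,
        integral_cos_sq_sub_sin_sq]
      simp [Real.sin_two_pi, Real.cos_two_pi]
    have h2pi : (0:ℝ) < 2 * Real.pi := by positivity
    have hsub_v : ∀ c r, 0 < r → closedBall c r ⊆ Ω →
        v c ≤ (2 * Real.pi)⁻¹ * ∫ θ in (0:ℝ)..(2 * Real.pi), v (circleMap c r θ) := by
      intro c r hr hcb
      have h1 := hsub c r hr (hcb.trans hΩstrip)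
      have h2 := hintpsi c r hr (hcb.trans hΩstrip)
      have h3 : IntervalIntegrable (fun θ => h (circleMap c r θ)) volume 0 (2 * Real.pi) :=
        (hhcont.comp (continuous_circleMap c r)).intervalIntegrable _ _
      have heq : ∫ θ in (0:ℝ)..(2 * Real.pi), v (circleMap c r θ)
          = (∫ θ in (0:ℝ)..(2 * Real.pi), psi (circleMap c r θ)) - 2 * Real.pi * h c := by
        rw [hv]
        have : (fun θ => psi (circleMap c r θ) + (-(h (circleMap c r θ))))
            = fun θ => psi (circleMap c r θ) - h (circleMap c r θ) := by
          funext θ; ring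
        rw [this, intervalIntegral.integral_sub h2 h3, hharm]
      rw [heq]
      have : v c = psi c - h c := by rw [hv]; ring
      rw [this, mul_sub]
      have : (2 * Real.pi)⁻¹ * (2 * Real.pi * h c) = h c := by field_simp
      rw [this]
      linarith
    have hint_v : ∀ c r, 0 < r → closedBall c r ⊆ Ω →
        IntervalIntegrable (fun θ => v (circleMap c r θ)) volume 0 (2 * Real.pi) := by
      intro c r hr hcb
      have h2 := hintpsi c r hr (hcb.trans hΩstrip)
      have h3 : IntervalIntegrable (fun θ => h (circleMap c r θ)) volume 0 (2 * Real.pi) :=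
        (hhcont.comp (continuous_circleMap c r)).intervalIntegrable _ _
      exact h2.add h3.neg
    have hbdry : ∀ p ∈ K, p ∉ Ω → v p ≤ ε * β^2 := by
      intro p hpK hpΩ
      have hre := hpK.1
      have him := hpK.2
      have hsq : (p.re - β)^2 ≤ β^2 := by
        have h1 : 0 ≤ p.re := hre.1
        have h2 : p.re ≤ b := hre.2
        nlinarith [hβ]
      have hcases : p.re = 0 ∨ p.re = b ∨ p.im^2 = T^2 := by
        by_contra hc
        push_neg at hc
        apply hpΩ
        refine ⟨⟨lt_of_le_of_ne hre.1 (Ne.symm hc.1), lt_of_le_of_ne hre.2 hc.2.1⟩, ?_⟩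
        have h1 : |p.im| ≤ T := abs_le.mpr ⟨him.1, him.2⟩
        have h2 : |p.im| ≠ T := by
          intro habs
          apply hc.2.2
          rw [← _root_.sq_abs, habs]
        have h3 : |p.im| < T := lt_of_le_of_ne h1 h2
        exact ⟨by rw [abs_lt] at h3; exact h3.1, by rw [abs_lt] at h3; exact h3.2⟩
      have hψb := hbound p hre
      rcases hcases with h0 | hb' | hTT
      · have : psi p = 0 := hzero p h0
        simp only [hv, hh, this, h0]
        nlinarith [sq_nonneg p.im]
      · have hαb : α * b = Real.pi/4 := by rw [hα]; field_simp
        have hbb : b - β = β := by rw [hβ]; ring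
        simp only [hv, hh, hb']
        rw [hbb] at *
        nlinarith [hψb.2, sq_nonneg p.im]
      · simp only [hv, hh, hTT]
        have e1 : ε * (p.re - β)^2 ≤ ε * β^2 := mul_le_mul_of_nonneg_left hsq hε.le
        have expand : ε * (T^2 - (p.re - β)^2)
            = ε*(T^2 - β^2) - ε*(p.re-β)^2 + ε*β^2 := by ring
        clear_value β α T
        nlinarith [hψb.2, hT2, e1, mul_nonneg hαpos.le hre.1,
          mul_nonneg hε.le (sq_nonneg β), expand]
    have htK : (t:ℂ) ∈ K := by
      refine ⟨?_, ?_⟩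
      · simp only [hK, Complex.ofReal_re]
        exact ⟨ht.le, htb.le⟩
      · simp only [Complex.ofReal_im]
        exact ⟨by linarith, hTpos.le⟩
    have hfinal := maxPrinciple hKcomp hΩopen hΩK husc_v hsub_v hint_v hbdry (t:ℂ) htK
    have hvt : v (t:ℂ) = psi t - α * t + ε * (t - β)^2 := by
      simp only [hv, hh, Complex.ofReal_re, Complex.ofReal_im]
      ring
    nlinarith [sq_nonneg (t - β)]
  have hfa : ∀ ε' : ℝ, 0 < ε' → psi t ≤ α * t + ε' := by
    intro ε' hε'
    have := key (ε'/β^2) (by positivity)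
    have heq : ε'/β^2 * β^2 = ε' := by field_simp
    linarith [this, heq.le]
  have : psi t ≤ α * t := le_of_forall_pos_le_add hfa
  rw [hα] at this
  calc psi t ≤ (Real.pi/4)/b * t := this
    _ = (Real.pi/4) * t / b := by ring

lemma maximal_aux {n : ℕ} (μ : (Fin n → ℝ) → ℝ)
    (hnonneg : ∀ x, 0 ≤ μ x)
    (hhom : ∀ (t : ℝ), 0 ≤ t → ∀ x, μ (t • x) = t * μ x)
    (hcont : Continuous μ)
    (w : (Fin n → ℂ) → ℝ)
    (hw : MemPSHU n {z : Fin n → ℂ | μ (imPart n z) < Real.pi/4} w)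
    (z : Fin n → ℂ) (hz : μ (imPart n z) < Real.pi/4) :
    w z ≤ μ (imPart n z) := by
  have hπ4 : (0:ℝ) < Real.pi/4 := by positivity
  have hμ0 : μ 0 = 0 := by
    have := hhom 0 le_rfl 0
    simpa using this
  set X := {z : Fin n → ℂ | μ (imPart n z) < Real.pi/4} with hXdef
  have him_cont : Continuous (imPart n) :=
    continuous_pi (fun i => Complex.continuous_im.comp (continuous_apply i))
  have hXopen : IsOpen X := by
    have : X = (fun z => μ (imPart n z)) ⁻¹' (Iio (Real.pi/4)) := rfl
    rw [this]
    exact (hcont.comp him_cont).isOpen_preimage _ isOpen_Iio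
  set x := rePart n z with hx
  set y := imPart n z with hy
  set d : Fin n → ℂ := fun j => Complex.I * (y j : ℂ) with hd
  set F : ℂ → Fin n → ℂ := fun ζ => reC n x + ζ • d with hF
  set ψ : ℂ → ℝ := fun ζ => w (F ζ) with hψ
  have hFcont : Continuous F := by
    rw [hF]
    exact continuous_const.add (continuous_id.smul continuous_const)
  have hFim : ∀ ζ : ℂ, imPart n (F ζ) = ζ.re • y := by
    intro ζ
    funext j
    simp only [hF, hd, imPart, reC, Pi.add_apply, Pi.smul_apply, smul_eq_mul,
      Complex.add_im, Complex.ofReal_im, Complex.mul_im, Complex.mul_re,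
      Complex.I_re, Complex.I_im, Complex.ofReal_re, zero_add]
    ring
  have hFmem : ∀ ζ : ℂ, 0 ≤ ζ.re → ζ.re * μ y < Real.pi/4 → F ζ ∈ X := by
    intro ζ h1 h2
    show μ (imPart n (F ζ)) < Real.pi/4
    rw [hFim, hhom ζ.re h1]
    exact h2
  have hFreal : ∀ ζ : ℂ, ζ.re = 0 → F ζ = reC n (x - ζ.im • y) := by
    intro ζ h0
    funext j
    simp only [hF, hd, reC, Pi.add_apply, Pi.smul_apply, smul_eq_mul, Pi.sub_apply]
    apply Complex.ext
    · simp only [Complex.add_re, Complex.ofReal_re, Complex.mul_re, Complex.mul_im,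
        Complex.I_re, Complex.I_im, Complex.ofReal_im, h0]
      ring
    · simp only [Complex.add_im, Complex.ofReal_im, Complex.mul_im, Complex.mul_re,
        Complex.I_re, Complex.I_im, Complex.ofReal_re, h0]
      ring
  have hrealX : ∀ v : Fin n → ℝ, reC n v ∈ X := by
    intro v
    show μ (imPart n (reC n v)) < Real.pi/4
    have : imPart n (reC n v) = 0 := by funext j; simp [imPart, reC]
    rw [this, hμ0]
    exact hπ4
  have hzF : z = F 1 := by
    funext j
    simp only [hF, hd, reC, Pi.add_apply, Pi.smul_apply, one_smul, hx, hy, rePart, imPart]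
    rw [mul_comm]
    exact (Complex.re_add_im (z j)).symm
  -- ε-approximation
  have key : ∀ ε : ℝ, 0 < ε → w z ≤ μ y + ε := by
    intro ε hε
    by_cases hπ : Real.pi/4 ≤ μ y + ε
    · have := (hw.2.1 z hz).2
      linarith
    · push_neg at hπ
      set b := (Real.pi/4)/(μ y + ε) with hb
      have hμyε : 0 < μ y + ε := by have := hnonneg y; linarith
      have hbpos : 0 < b := by rw [hb]; positivity
      have h1b : 1 < b := (one_lt_div hμyε).mpr hπ
      have hbμ : b * μ y < Real.pi/4 := by
        have h2 : b * (μ y + ε) = Real.pi/4 := by rw [hb]; field_simp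
        nlinarith [hnonneg y]
      have hstrip_mem : ∀ ζ : ℂ, ζ.re ∈ Icc 0 b → F ζ ∈ X := by
        intro ζ hζ
        apply hFmem ζ hζ.1
        calc ζ.re * μ y ≤ b * μ y := mul_le_mul_of_nonneg_right hζ.2 (hnonneg y)
          _ < Real.pi/4 := hbμ
      have huscψ : UpperSemicontinuousOn ψ {ζ : ℂ | ζ.re ∈ Icc 0 b} := by
        intro ζ hζ r hr
        have husc := hw.1.1 (F ζ) (hstrip_mem ζ hζ) r hr
        have htendF : Tendsto F (nhdsWithin ζ {ζ : ℂ | ζ.re ∈ Icc 0 b})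
            (nhdsWithin (F ζ) X) :=
          (hFcont.continuousWithinAt).tendsto_nhdsWithin (fun ξ hξ => hstrip_mem ξ hξ)
        exact htendF.eventually husc
      have hboundψ : ∀ ζ : ℂ, ζ.re ∈ Icc 0 b → 0 ≤ ψ ζ ∧ ψ ζ ≤ Real.pi/4 := by
        intro ζ hζ
        have := hw.2.1 (F ζ) (hstrip_mem ζ hζ)
        exact ⟨this.1, this.2.le⟩
      have hzeroψ : ∀ ζ : ℂ, ζ.re = 0 → ψ ζ = 0 := by
        intro ζ h0
        rw [hψ]
        simp only
        rw [hFreal ζ h0]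
        exact hw.2.2 _ (hrealX _)
      have hsubψ : ∀ c r, 0 < r → closedBall c r ⊆ {ζ : ℂ | ζ.re ∈ Ioo 0 b} →
          ψ c ≤ (2 * Real.pi)⁻¹ * ∫ θ in (0:ℝ)..(2 * Real.pi), ψ (circleMap c r θ) := by
        intro c r hr hcb
        have := hw.1.2 (reC n x) d c r hr (fun ζ hζ => by
          apply hstrip_mem
          have := hcb hζ
          exact ⟨this.1.le, this.2.le⟩)
        exact this
      have hintψ : ∀ c r, 0 < r → closedBall c r ⊆ {ζ : ℂ | ζ.re ∈ Ioo 0 b} →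
          IntervalIntegrable (fun θ => ψ (circleMap c r θ)) volume 0 (2 * Real.pi) := by
        intro c r hr hcb
        have hmemθ : ∀ θ : ℝ, F (circleMap c r θ) ∈ X := by
          intro θ
          have h1 : circleMap c r θ ∈ closedBall c r := circleMap_mem_closedBall c hr.le θ
          have := hcb h1
          exact hstrip_mem _ ⟨this.1.le, this.2.le⟩
        have huscg : UpperSemicontinuous (fun θ : ℝ => ψ (circleMap c r θ)) := by
          intro θ₀ r' hr'
          have husc := hw.1.1 (F (circleMap c r θ₀)) (hmemθ θ₀) r' hr'
          rw [nhdsWithin_eq_nhds.mpr (hXopen.mem_nhds (hmemθ θ₀))] at husc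
          have htend : Tendsto (fun θ : ℝ => F (circleMap c r θ)) (nhds θ₀)
              (nhds (F (circleMap c r θ₀))) :=
            ((hFcont.comp (continuous_circleMap c r)).tendsto θ₀)
          exact htend.eventually husc
        have hmeas : Measurable (fun θ : ℝ => ψ (circleMap c r θ)) := huscg.measurable
        rw [intervalIntegrable_iff]
        haveI : IsFiniteMeasure (volume.restrict (Set.uIoc (0:ℝ) (2*Real.pi))) := by
          constructor
          rw [Measure.restrict_apply_univ, Set.uIoc]
          rw [Real.volume_Ioc]
          exact ENNReal.ofReal_lt_top
        apply MeasureTheory.Integrable.mono' (g := fun _ : ℝ => Real.pi/4)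
          (integrable_const _) hmeas.aestronglyMeasurable.restrict
        apply Filter.Eventually.of_forall
        intro θ
        have hb := hw.2.1 _ (hmemθ θ)
        rw [Real.norm_eq_abs, abs_le]
        constructor
        · have : (0:ℝ) ≤ ψ (circleMap c r θ) := hb.1
          linarith
        · exact hb.2.le
      have hfinal := strip_PL ψ b hbpos huscψ hboundψ hzeroψ hsubψ hintψ 1 one_pos h1b
      have hψ1 : ψ ((1:ℝ):ℂ) = w z := by
        show w (F ((1:ℝ):ℂ)) = w z
        rw [Complex.ofReal_one, ← hzF]
      rw [hψ1] at hfinal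
      calc w z ≤ (Real.pi/4) * 1 / b := hfinal
        _ = μ y + ε := by rw [hb]; field_simp
  -- conclude
  have : w z ≤ μ y := le_of_forall_pos_le_add key
  exact this

lemma part3 {n : ℕ} (μ : (Fin n → ℝ) → ℝ)
    (hnonneg : ∀ x, 0 ≤ μ x)
    (hhom : ∀ (t : ℝ), 0 ≤ t → ∀ x, μ (t • x) = t * μ x)
    (hcont : Continuous μ)
    (hmax : ∀ w : (Fin n → ℂ) → ℝ, MemPSHU n {z : Fin n → ℂ | μ (imPart n z) < Real.pi/4} w →
      ∀ z, μ (imPart n z) < Real.pi/4 → w z ≤ μ (imPart n z))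
    (humem : MemPSHU n {z : Fin n → ℂ | μ (imPart n z) < Real.pi/4}
      (fun z => μ (imPart n z)))
    (x ξ : Fin n → ℝ) :
    ESup n {z : Fin n → ℂ | μ (imPart n z) < Real.pi/4} x ξ = ((μ ξ : ℝ) : EReal) ∧
      EInf n {z : Fin n → ℂ | μ (imPart n z) < Real.pi/4} (fun z => μ (imPart n z)) x ξ
        = ((μ ξ : ℝ) : EReal) := by
  set X := {z : Fin n → ℂ | μ (imPart n z) < Real.pi/4} with hX
  set u : (Fin n → ℂ) → ℝ := fun z => μ (imPart n z) with hu
  set v : Fin n → ℂ := Complex.I • reC n ξ with hv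
  set γ : ℝ → Fin n → ℂ := fun t => reC n x + t • v with hγ
  set ε : ℝ := (Real.pi/4)/(1 + μ ξ + μ (-ξ)) with hε
  have hden : 0 < 1 + μ ξ + μ (-ξ) := by have := hnonneg ξ; have := hnonneg (-ξ); linarith
  have hεpos : 0 < ε := by rw [hε]; positivity
  have hγ0 : γ 0 = reC n x := by rw [hγ]; simp
  have hγcd : ContDiffOn ℝ 1 γ (Set.Ioo (-ε) ε) := by
    apply ContDiff.contDiffOn
    exact contDiff_const.add (contDiff_id.smul contDiff_const)
  have hγd : HasDerivAt γ v 0 := by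
    have h1 : HasDerivAt (fun t : ℝ => t • v) ((1:ℝ) • v) 0 := (hasDerivAt_id 0).smul_const v
    have h2 := h1.const_add (reC n x)
    simpa [hγ] using h2
  have hγim : ∀ t : ℝ, imPart n (γ t) = t • ξ := by
    intro t
    funext j
    simp only [hγ, hv, imPart, reC, Pi.add_apply, Pi.smul_apply, Complex.add_im,
      Complex.ofReal_im, Complex.real_smul, Complex.mul_im, Complex.ofReal_re,
      smul_eq_mul, Complex.I_re, Complex.I_im, Complex.mul_re]
    simp
  have hsmul : ∀ t : ℝ, t < 0 → ∀ w : Fin n → ℝ, t • w = (-t) • (-w) := by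
    intro t ht w; funext j; simp
  have hγmem : ∀ t ∈ Set.Ioo (-ε) ε, γ t ∈ X := by
    intro t ht
    show μ (imPart n (γ t)) < Real.pi/4
    rw [hγim]
    have hεeq : ε * (1 + μ ξ + μ (-ξ)) = Real.pi/4 := by rw [hε]; field_simp
    rcases le_or_gt 0 t with h0 | h0
    · rw [hhom t h0]
      have h1 : t * μ ξ ≤ ε * μ ξ := mul_le_mul_of_nonneg_right ht.2.le (hnonneg ξ)
      nlinarith [hnonneg ξ, hnonneg (-ξ), hεpos]
    · rw [hsmul t h0 ξ, hhom (-t) (by linarith)]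
      have h1 : -t * μ (-ξ) ≤ ε * μ (-ξ) := by
        apply mul_le_mul_of_nonneg_right _ (hnonneg (-ξ))
        linarith [ht.1]
      nlinarith [hnonneg ξ, hnonneg (-ξ), hεpos]
  -- value of limsup for u along γ
  have huγ : ∀ t : ℝ, 0 < t → u (γ t) / t = μ ξ := by
    intro t ht
    show μ (imPart n (γ t)) / t = μ ξ
    rw [hγim, hhom t ht.le]
    field_simp
  have hLu : limsup (fun t : ℝ => ((u (γ t) / t : ℝ) : EReal)) (nhdsWithin 0 (Set.Ioi 0))
      = ((μ ξ : ℝ) : EReal) := by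
    have hev : (fun t : ℝ => ((u (γ t) / t : ℝ) : EReal))
        =ᶠ[nhdsWithin 0 (Set.Ioi 0)] (fun _ => ((μ ξ : ℝ) : EReal)) := by
      filter_upwards [self_mem_nhdsWithin] with t ht
      rw [huγ t ht]
    rw [limsup_congr hev, limsup_const]
  -- general lower bound: along any admissible curve the limsup equals μ ξ
  have him_cont : Continuous (imPart n) :=
    continuous_pi (fun i => Complex.continuous_im.comp (continuous_apply i))
  have hgen : ∀ δ : ℝ, 0 < δ → ∀ g : ℝ → Fin n → ℂ, (∀ t ∈ Set.Ioo (-δ) δ, g t ∈ X) →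
      g 0 = reC n x → HasDerivAt g v 0 →
      limsup (fun t : ℝ => ((u (g t) / t : ℝ) : EReal)) (nhdsWithin 0 (Set.Ioi 0))
        = ((μ ξ : ℝ) : EReal) := by
    intro δ hδ g hmemg hg0 hgd
    have hslope := hasDerivAt_iff_tendsto_slope.mp hgd
    have hsub : Set.Ioi (0:ℝ) ⊆ {(0:ℝ)}ᶜ := fun t ht => ne_of_gt ht
    have hslope' : Tendsto (slope g 0) (nhdsWithin 0 (Set.Ioi 0)) (nhds v) :=
      hslope.mono_left (nhdsWithin_mono 0 hsub)
    have himv : imPart n v = ξ := by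
      funext j
      simp [hv, imPart, reC, Complex.mul_im]
    have htendIm : Tendsto (fun t => imPart n (slope g 0 t)) (nhdsWithin 0 (Set.Ioi 0))
        (nhds ξ) := by
      rw [← himv]
      exact (him_cont.tendsto v).comp hslope'
    have htendμ : Tendsto (fun t => μ (imPart n (slope g 0 t))) (nhdsWithin 0 (Set.Ioi 0))
        (nhds (μ ξ)) := (hcont.tendsto ξ).comp htendIm
    have heq : ∀ᶠ t in nhdsWithin 0 (Set.Ioi 0),
        μ (imPart n (slope g 0 t)) = u (g t) / t := by
      filter_upwards [self_mem_nhdsWithin] with t ht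
      have ht0 : (0:ℝ) < t := ht
      have hslope_eq : slope g 0 t = t⁻¹ • (g t - g 0) := by
        rw [slope_def_module]
        simp
      have hims : imPart n (slope g 0 t) = t⁻¹ • imPart n (g t) := by
        rw [hslope_eq]
        funext j
        simp only [imPart, Pi.smul_apply, Pi.sub_apply, Complex.real_smul, Complex.mul_im,
          Complex.ofReal_re, Complex.ofReal_im, Complex.sub_im, hg0]
        simp [reC]
      rw [hims]
      have : imPart n (g t) = t • (t⁻¹ • imPart n (g t)) := by
        rw [smul_smul, mul_inv_cancel₀ ht0.ne', one_smul]
      show μ (t⁻¹ • imPart n (g t)) = μ (imPart n (g t)) / t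
      conv_rhs => rw [this, hhom t ht0.le]
      field_simp
    have htend : Tendsto (fun t => u (g t) / t) (nhdsWithin 0 (Set.Ioi 0)) (nhds (μ ξ)) :=
      htendμ.congr' heq
    have htendE : Tendsto (fun t : ℝ => ((u (g t) / t : ℝ) : EReal)) (nhdsWithin 0 (Set.Ioi 0))
        (nhds ((μ ξ : ℝ) : EReal)) := by
      rw [EReal.tendsto_coe]
      exact htend
    exact htendE.limsup_eq
  have hEInfu : EInf n X u x ξ = ((μ ξ : ℝ) : EReal) := by
    apply le_antisymm
    · apply sInf_le
      exact ⟨ε, hεpos, γ, hγcd, hγmem, hγ0, hγd, hLu.symm⟩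
    · apply le_sInf
      rintro L ⟨δ, hδ, g, hgcd, hgmem, hg0, hgd, rfl⟩
      exact (hgen δ hδ g hgmem hg0 hgd).ge
  refine ⟨?_, hEInfu⟩
  apply le_antisymm
  · apply iSup₂_le
    intro w hw
    have hmemL : limsup (fun t : ℝ => ((w (γ t) / t : ℝ) : EReal)) (nhdsWithin 0 (Set.Ioi 0))
        ∈ {L : EReal | ∃ ε' : ℝ, 0 < ε' ∧ ∃ g : ℝ → Fin n → ℂ,
          ContDiffOn ℝ 1 g (Set.Ioo (-ε') ε') ∧ (∀ t ∈ Set.Ioo (-ε') ε', g t ∈ X) ∧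
          g 0 = reC n x ∧ HasDerivAt g (Complex.I • reC n ξ) 0 ∧
          L = limsup (fun t : ℝ => ((w (g t) / t : ℝ) : EReal)) (nhdsWithin 0 (Set.Ioi 0))} :=
      ⟨ε, hεpos, γ, hγcd, hγmem, hγ0, hγd, rfl⟩
    refine le_trans (sInf_le hmemL) ?_
    have hub : ∀ᶠ t in nhdsWithin 0 (Set.Ioi 0),
        ((w (γ t) / t : ℝ) : EReal) ≤ ((μ ξ : ℝ) : EReal) := by
      filter_upwards [Ioo_mem_nhdsGT_of_mem (Set.mem_Ico.mpr ⟨le_refl (0:ℝ), hεpos⟩),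
        self_mem_nhdsWithin] with t ht ht'
      have ht0 : (0:ℝ) < t := ht'
      have htmem : t ∈ Set.Ioo (-ε) ε := ⟨by linarith [ht.1], ht.2⟩
      have h1 : w (γ t) ≤ μ (imPart n (γ t)) := hmax w hw (γ t) (hγmem t htmem)
      have h2 : μ (imPart n (γ t)) = t * μ ξ := by rw [hγim, hhom t ht0.le]
      have h3 : w (γ t) / t ≤ μ ξ := by
        rw [div_le_iff₀ ht0]
        rw [h2] at h1
        linarith [h1]
      exact_mod_cast EReal.coe_le_coe_iff.mpr h3
    exact limsup_le_of_le (by isBoundedDefault) hub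
  · have h1 : EInf n X u x ξ ≤ ESup n X x ξ := by
      apply le_biSup (f := fun w => EInf n X w x ξ)
      exact humem
    rw [hEInfu] at h1
    exact h1

/-- **Theorem 6.1.**  Let `μ : ℝⁿ → [0, ∞)` be a positively homogeneous convex function
with `μ x = 0` iff `x = 0` (the Minkowski functional of a bounded open convex set
containing the origin, not necessarily symmetric).  Let
`X_μ = {z ∈ ℂⁿ : μ (Im z) < π/4}` and `u_μ z = μ (Im z)`.  Then
`u_μ ∈ 𝒰(ℝⁿ, X_μ)`, `u_μ` is maximal, and
`E_{ℝⁿ,X_μ}(x, ξ) = E_{u_μ,X_μ}(x, ξ) = μ ξ` for all `x, ξ ∈ ℝⁿ`. -/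
theorem minkowski_tube_maximal
    (μ : (Fin n → ℝ) → ℝ)
    (hnonneg : ∀ x, 0 ≤ μ x)
    (hhom : ∀ (t : ℝ), 0 ≤ t → ∀ x, μ (t • x) = t * μ x)
    (hconvex : ConvexOn ℝ Set.univ μ)
    (hzero : ∀ x, μ x = 0 ↔ x = 0)
    (X : Set (Fin n → ℂ)) (hX : X = {z : Fin n → ℂ | μ (imPart n z) < Real.pi / 4})
    (u : (Fin n → ℂ) → ℝ) (hu : u = fun z => μ (imPart n z)) :
    MemPSHU n X u ∧
      (∀ w : (Fin n → ℂ) → ℝ, MemPSHU n X w → ∀ z ∈ X, w z ≤ u z) ∧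
      ∀ x ξ : Fin n → ℝ,
        ESup n X x ξ = ((μ ξ : ℝ) : EReal) ∧ EInf n X u x ξ = ((μ ξ : ℝ) : EReal) := by
  have hcont : Continuous μ := by
    rw [← continuousOn_univ]
    exact hconvex.continuousOn isOpen_univ
  subst hX hu
  have him_cont : Continuous (imPart n) :=
    continuous_pi (fun i => Complex.continuous_im.comp (continuous_apply i))
  have hμ0 : μ 0 = 0 := by simpa using hhom 0 le_rfl 0
  have humem : MemPSHU n {z : Fin n → ℂ | μ (imPart n z) < Real.pi / 4}
      (fun z => μ (imPart n z)) := by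
    refine ⟨⟨?_, ?_⟩, ?_, ?_⟩
    · exact ((hcont.comp him_cont).upperSemicontinuous).upperSemicontinuousOn _
    · intro a b c r hr _
      exact jensen_circle μ hconvex hcont a b c r
    · intro z hz
      exact ⟨hnonneg _, hz⟩
    · intro x _
      show μ (imPart n (reC n x)) = 0
      have h0 : imPart n (reC n x) = 0 := by funext j; simp [imPart, reC]
      rw [h0, hμ0]
  have hmax : ∀ w : (Fin n → ℂ) → ℝ,
      MemPSHU n {z : Fin n → ℂ | μ (imPart n z) < Real.pi / 4} w →
      ∀ z ∈ {z : Fin n → ℂ | μ (imPart n z) < Real.pi / 4}, w z ≤ μ (imPart n z) :=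
    fun w hw z hz => maximal_aux μ hnonneg hhom hcont w hw z hz
  exact ⟨humem, hmax, fun x ξ =>
    part3 μ hnonneg hhom hcont (fun w hw z hz => hmax w hw z hz) humem x ξ⟩
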